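/- For n ≥ 2 and Ω = {(z,w) ∈ ℂ × ℂ^{n-1} : |z-1|² + |w|² < 1}, for each real γ with γ < (n+1)/2, the branch f_γ of z^{-γ} on Ω normalized by f_γ(1) = 1 belongs to A²(Ω), i.e. ∫_Ω |z|^{-2γ} dV < ∞. -/

import Mathlib

open MeasureTheory Set Metric

open scoped Real ENNReal NNReal

/-- Integrability of `(x² + y²)^(s/2)` on a disc around the origin in `ℝ × ℝ`, for `s > -2`. -/
lemma aux_integrableOn_rpow_RR {s : ℝ} (hs : -2 < s) {R : ℝ} (hR : 0 < R) :
    IntegrableOn (fun q : ℝ × ℝ => (q.1 ^ 2 + q.2 ^ 2) ^ (s / 2))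
      {q : ℝ × ℝ | q.1 ^ 2 + q.2 ^ 2 < R ^ 2} volume := by
  set g : ℝ × ℝ → ℝ := fun q => (q.1 ^ 2 + q.2 ^ 2) ^ (s / 2) with hg
  set T : Set (ℝ × ℝ) := Ioo (0 : ℝ) R ×ˢ Ioo (-π) π with hT
  have hTt : T ⊆ polarCoord.target := by
    rintro ⟨r, θ⟩ ⟨h1, h2⟩
    exact ⟨h1.1, h2⟩
  have hTm : MeasurableSet T := measurableSet_Ioo.prod measurableSet_Ioo
  set B : ℝ × ℝ → ℝ × ℝ →L[ℝ] ℝ × ℝ := fun p =>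
    LinearMap.toContinuousLinearMap (Matrix.toLin (Module.Basis.finTwoProd ℝ) (Module.Basis.finTwoProd ℝ)
      !![Real.cos p.2, -p.1 * Real.sin p.2; Real.sin p.2, p.1 * Real.cos p.2]) with hB
  have hBdet : ∀ p, (B p).det = p.1 := by
    intro p
    conv_rhs => rw [← one_mul p.1, ← Real.cos_sq_add_sin_sq p.2]
    simp only [hB, neg_mul, LinearMap.det_toContinuousLinearMap, LinearMap.det_toLin,
      Matrix.det_fin_two_of, sub_neg_eq_add]
    ring
  have hderiv : ∀ p ∈ T, HasFDerivWithinAt polarCoord.symm (B p) T p := fun p _ =>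
    (hasFDerivAt_polarCoord_symm p).hasFDerivWithinAt
  have hinj : InjOn polarCoord.symm T := by
    apply polarCoord.symm.injOn.mono
    rw [OpenPartialHomeomorph.symm_source]
    exact hTt
  have key : IntegrableOn g (polarCoord.symm '' T) volume := by
    rw [integrableOn_image_iff_integrableOn_abs_det_fderiv_smul volume hTm hderiv hinj g]
    have heq : ∀ p : ℝ × ℝ, |(B p).det| • g (polarCoord.symm p) = |p.1| * |p.1| ^ s := by
      intro p
      rw [hBdet, smul_eq_mul]
      congr 1
      have h1 : (polarCoord.symm p).1 ^ 2 + (polarCoord.symm p).2 ^ 2 = p.1 ^ 2 := by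
        simp only [polarCoord_symm_apply]
        rw [mul_pow, mul_pow, ← mul_add, Real.cos_sq_add_sin_sq, mul_one]
      rw [hg]
      simp only [h1]
      rw [← sq_abs p.1, ← Real.rpow_natCast |p.1| 2, ← Real.rpow_mul (abs_nonneg _)]
      congr 1
      push_cast
      ring
    simp only [heq]
    have h1d : IntegrableOn (fun r : ℝ => |r| * |r| ^ s) (Ioo 0 R) volume := by
      have hbase : IntegrableOn (fun r : ℝ => r ^ (s + 1)) (Ioo 0 R) volume :=
        (intervalIntegral.intervalIntegrable_rpow' (by linarith)).1.mono_set
          Ioo_subset_Ioc_self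
      refine hbase.congr_fun (fun r hr => ?_) measurableSet_Ioo
      have hr0 : 0 < r := hr.1
      beta_reduce
      rw [abs_of_pos hr0, Real.rpow_add_one hr0.ne', mul_comm]
    have hconst : IntegrableOn (fun _ : ℝ => (1 : ℝ)) (Ioo (-π) π) volume :=
      integrableOn_const measure_Ioo_lt_top.ne
    have hprod := h1d.mul_prod hconst
    rw [IntegrableOn, hT, Measure.volume_eq_prod, ← Measure.prod_restrict]
    simpa using hprod
  set M : Set (ℝ × ℝ) := {q : ℝ × ℝ | q.1 ^ 2 + q.2 ^ 2 < R ^ 2} with hM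
  have hsub : M ∩ polarCoord.source ⊆ polarCoord.symm '' T := by
    rintro q ⟨hqM, hqs⟩
    refine ⟨polarCoord q, ?_, polarCoord.left_inv hqs⟩
    have hq0 : 0 < q.1 ^ 2 + q.2 ^ 2 := by
      rcases hqs with h | h
      · have : q.1 ≠ 0 := ne_of_gt h
        positivity
      · have : q.2 ≠ 0 := h
        positivity
    constructor
    · constructor
      · exact Real.sqrt_pos.2 hq0
      · exact (Real.sqrt_lt' hR).2 hqM
    · have hre : (Complex.equivRealProd.symm q).re = q.1 := by
        simp [Complex.equivRealProd_symm_apply]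
      have him : (Complex.equivRealProd.symm q).im = q.2 := by
        simp [Complex.equivRealProd_symm_apply]
      refine ⟨Complex.neg_pi_lt_arg _, Complex.arg_lt_pi_iff.2 ?_⟩
      rcases hqs with h | h
      · exact Or.inl (by rw [hre]; exact le_of_lt h)
      · exact Or.inr (by rw [him]; exact h)
  have hae : (M : Set (ℝ × ℝ)) =ᵐ[volume] (M ∩ polarCoord.source : Set (ℝ × ℝ)) := by
    have h1 : (M ∩ polarCoord.source : Set (ℝ × ℝ)) =ᵐ[volume] (M ∩ univ : Set (ℝ × ℝ)) :=
      (MeasureTheory.ae_eq_set_inter (ae_eq_refl M) polarCoord_source_ae_eq_univ)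
    simpa using h1.symm
  exact ((key.mono_set hsub).congr_set_ae hae)

/-- Integrability of `‖z‖ ^ s` on a ball around the origin in `ℂ`, for `s > -2`. -/
lemma aux_integrableOn_rpow_C {s : ℝ} (hs : -2 < s) {R : ℝ} (hR : 0 < R) :
    IntegrableOn (fun z : ℂ => ‖z‖ ^ s) (Metric.ball (0 : ℂ) R) volume := by
  rw [← (Complex.volume_preserving_equiv_real_prod.symm
      Complex.measurableEquivRealProd).integrableOn_comp_preimage
      (MeasurableEquiv.measurableEmbedding _)]
  have hset : (Complex.measurableEquivRealProd.symm ⁻¹' Metric.ball (0 : ℂ) R)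
      = {q : ℝ × ℝ | q.1 ^ 2 + q.2 ^ 2 < R ^ 2} := by
    ext q
    simp only [Set.mem_preimage, Metric.mem_ball, dist_zero_right, Set.mem_setOf_eq]
    rw [show Complex.measurableEquivRealProd.symm q = Complex.equivRealProd.symm q from rfl,
      Complex.equivRealProd_symm_apply]
    rw [Complex.norm_def, Complex.normSq_add_mul_I]
    exact Real.sqrt_lt' hR
  have hfun : ∀ q : ℝ × ℝ, ((fun z : ℂ => ‖z‖ ^ s) ∘ Complex.measurableEquivRealProd.symm) q
      = (q.1 ^ 2 + q.2 ^ 2) ^ (s / 2) := by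
    intro q
    simp only [Function.comp_apply]
    rw [show Complex.measurableEquivRealProd.symm q = Complex.equivRealProd.symm q from rfl,
      Complex.equivRealProd_symm_apply, Complex.norm_def,
      Complex.normSq_add_mul_I, Real.sqrt_eq_rpow, ← Real.rpow_mul (by positivity)]
    congr 1
    ring
  rw [hset]
  exact (aux_integrableOn_rpow_RR hs hR).congr_fun (fun q _ => (hfun q).symm)
    ((isOpen_lt ((continuous_fst.pow 2).add (continuous_snd.pow 2))
      continuous_const).measurableSet)

/-- For n ≥ 2 and Ω = {(z,w) ∈ ℂ × ℂ^{n-1} : |z-1|² + |w|² < 1} (the unit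
ball tangent to {Re z = 0} at the origin), for every real γ < (n+1)/2 the function
|z|^{-2γ} is integrable on Ω, i.e. the branch f_γ of z^{-γ} with f_γ(1)=1 lies in A²(Ω). -/
theorem tangent_ball_negative_power_integrable
    {n : ℕ} (hn : 2 ≤ n) (γ : ℝ) (hγ : γ < ((n : ℝ) + 1) / 2)
    (Ω : Set (Fin n → ℂ))
    (hΩ : Ω = {z : Fin n → ℂ |
      ∑ i, ‖z i - (if (i : ℕ) = 0 then 1 else 0)‖ ^ 2 < 1}) :
    IntegrableOn
      (fun z : Fin n → ℂ => ‖z ⟨0, by omega⟩‖ ^ (-(2 * γ)) : (Fin n → ℂ) → ℝ)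
      Ω volume := by
  obtain ⟨m, rfl⟩ : ∃ m, n = m + 1 := ⟨n - 1, by omega⟩
  have hidx : (⟨0, by omega⟩ : Fin (m + 1)) = 0 := rfl
  set e' : ℝ := -(2 * γ) with he'def
  have hexp : (-2 : ℝ) < (m : ℝ) + e' := by
    have h1 : γ < ((m : ℝ) + 2) / 2 := by push_cast at hγ ⊢; linarith
    rw [he'def]; linarith
  -- the product-side set
  set S : Set (ℂ × (Fin m → ℂ)) :=
    {p | ‖p.1 - 1‖ ^ 2 + ∑ j, ‖p.2 j‖ ^ 2 < 1} with hSdef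
  have hScont : Continuous fun p : ℂ × (Fin m → ℂ) => ‖p.1 - 1‖ ^ 2 + ∑ j, ‖p.2 j‖ ^ 2 :=
    ((continuous_fst.sub continuous_const).norm.pow 2).add
      (continuous_finset_sum _ fun j _ => ((continuous_apply j).comp continuous_snd).norm.pow 2)
  have hSmeas : MeasurableSet S := (isOpen_lt hScont continuous_const).measurableSet
  -- the measurable equivalence
  set E := MeasurableEquiv.piFinSuccAbove (fun _ : Fin (m + 1) => ℂ) 0 with hEdef
  have hmp : MeasurePreserving E volume
      ((volume : Measure ℂ).prod (volume : Measure (Fin m → ℂ))) := by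
    have h := measurePreserving_piFinSuccAbove (fun _ : Fin (m + 1) => (volume : Measure ℂ)) 0
    simpa only [← volume_pi] using h
  have hΩpre : Ω = E ⁻¹' S := by
    rw [hΩ]
    ext z
    simp only [Set.mem_setOf_eq, Set.mem_preimage, hSdef, hEdef,
      MeasurableEquiv.piFinSuccAbove_apply]
    rw [Fin.sum_univ_succAbove (fun i => ‖z i - if (i : ℕ) = 0 then 1 else 0‖ ^ 2) 0]
    simp [Fin.succAbove_zero, Fin.val_succ, Fin.tail]
  have hFmeas : Measurable fun z : Fin (m + 1) → ℂ => ‖z 0‖ ^ e' := by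
    fun_prop
  rw [hidx]
  refine ⟨hFmeas.aestronglyMeasurable, ?_⟩
  rw [hasFiniteIntegral_iff_ofReal (Filter.Eventually.of_forall fun z =>
    Real.rpow_nonneg (norm_nonneg _) _)]
  set G : ℂ × (Fin m → ℂ) → ℝ≥0∞ := fun p => ENNReal.ofReal (‖p.1‖ ^ e') with hGdef
  have hGmeas : Measurable G := by
    apply Measurable.ennreal_ofReal
    fun_prop
  set Cb : ℝ≥0∞ := ENNReal.ofReal ((2 : ℝ) ^ m * Real.pi ^ m) with hCb
  have step1 : ∫⁻ z in Ω, ENNReal.ofReal (‖z 0‖ ^ e') ∂volume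
      = ∫⁻ p in S, G p ∂((volume : Measure ℂ).prod (volume : Measure (Fin m → ℂ))) := by
    rw [hΩpre]
    rw [← (hmp.restrict_preimage hSmeas).lintegral_comp hGmeas]
    refine lintegral_congr fun z => ?_
    simp [hGdef, hEdef, MeasurableEquiv.piFinSuccAbove_apply]
  have step2 : ∫⁻ p in S, G p ∂((volume : Measure ℂ).prod (volume : Measure (Fin m → ℂ)))
      = ∫⁻ a : ℂ, ∫⁻ w : Fin m → ℂ, S.indicator G (a, w) ∂volume ∂volume := by
    rw [← lintegral_indicator hSmeas G, lintegral_prod _ ((hGmeas.indicator hSmeas).aemeasurable)]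
  have step3 : ∀ a : ℂ, (∫⁻ w : Fin m → ℂ, S.indicator G (a, w) ∂volume)
      ≤ (Metric.ball (0 : ℂ) 2).indicator
          (fun a => Cb * ENNReal.ofReal (‖a‖ ^ ((m : ℝ) + e'))) a := by
    intro a
    set c : ℝ := 1 - ‖a - 1‖ ^ 2 with hc
    set Sa : Set (Fin m → ℂ) := {w | ∑ j, ‖w j‖ ^ 2 < c} with hSa
    have hSam : MeasurableSet Sa :=
      (isOpen_lt (continuous_finset_sum _ fun j _ => ((continuous_apply j).norm.pow 2))
        continuous_const).measurableSet
    have hind : ∀ w, S.indicator G (a, w) = Sa.indicator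
        (fun _ => ENNReal.ofReal (‖a‖ ^ e')) w := by
      intro w
      have hmemiff : ((a, w) ∈ S) ↔ w ∈ Sa := by
        simp only [hSdef, Set.mem_setOf_eq, hSa, hc]
        constructor
        · intro h; linarith
        · intro h; linarith
      by_cases hw : w ∈ Sa
      · rw [Set.indicator_of_mem hw, Set.indicator_of_mem (hmemiff.2 hw)]
      · rw [Set.indicator_of_notMem hw, Set.indicator_of_notMem (fun h => hw (hmemiff.1 h))]
    rw [lintegral_congr hind, lintegral_indicator_const hSam]
    by_cases hcpos : 0 < c
    · have hnn : (0 : ℝ) ≤ ‖a - 1‖ := norm_nonneg _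
      have ha1 : ‖a - 1‖ < 1 := by nlinarith
      have ha2 : ‖a‖ < 2 := by
        have h := norm_sub_norm_le a 1
        rw [norm_one] at h
        linarith
      have hane : a ≠ 0 := by
        intro h
        rw [h] at ha1
        simp at ha1
      have hapos : 0 < ‖a‖ := norm_pos_iff.2 hane
      have hc2 : c ≤ 2 * ‖a‖ := by
        rcases le_total ‖a‖ 1 with h | h
        · have h1 : (1 : ℝ) - ‖a‖ ≤ ‖a - 1‖ := by
            have h2 := norm_sub_norm_le (1 : ℂ) a
            rwa [norm_one, norm_sub_rev] at h2
          nlinarith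
        · nlinarith
      have hmem : a ∈ Metric.ball (0 : ℂ) 2 := by
        simpa [Metric.mem_ball, dist_zero_right] using ha2
      rw [Set.indicator_of_mem hmem]
      have hsub : Sa ⊆ Set.pi Set.univ (fun _ : Fin m => Metric.ball (0 : ℂ) (Real.sqrt c)) := by
        intro w hw j _
        have h1 : ‖w j‖ ^ 2 ≤ ∑ k, ‖w k‖ ^ 2 :=
          Finset.single_le_sum (f := fun k => ‖w k‖ ^ 2)
            (fun k _ => by positivity) (Finset.mem_univ j)
        have h2 : ‖w j‖ ^ 2 < c := lt_of_le_of_lt h1 hw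
        rw [Metric.mem_ball, dist_zero_right]
        exact (Real.lt_sqrt (norm_nonneg _)).2 h2
      have hvol : volume Sa ≤ (ENNReal.ofReal (Real.pi * c)) ^ m := by
        calc volume Sa
            ≤ volume (Set.pi Set.univ fun _ : Fin m => Metric.ball (0 : ℂ) (Real.sqrt c)) :=
              measure_mono hsub
          _ = ∏ _j : Fin m, volume (Metric.ball (0 : ℂ) (Real.sqrt c)) := volume_pi_pi _
          _ = (ENNReal.ofReal (Real.sqrt c) ^ 2 * NNReal.pi) ^ m := by
              rw [Finset.prod_const, Complex.volume_ball, Finset.card_univ, Fintype.card_fin]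
          _ = (ENNReal.ofReal (Real.pi * c)) ^ m := by
              congr 1
              rw [← ENNReal.ofReal_pow (Real.sqrt_nonneg _), Real.sq_sqrt hcpos.le,
                show ((NNReal.pi : ℝ≥0∞)) = ENNReal.ofReal Real.pi by
                  rw [← ENNReal.ofReal_coe_nnreal, NNReal.coe_real_pi],
                ← ENNReal.ofReal_mul hcpos.le, mul_comm]
      calc ENNReal.ofReal (‖a‖ ^ e') * volume Sa
          ≤ ENNReal.ofReal (‖a‖ ^ e') * (ENNReal.ofReal (Real.pi * c)) ^ m :=
            mul_le_mul_right hvol _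
        _ = ENNReal.ofReal (‖a‖ ^ e' * (Real.pi * c) ^ m) := by
            rw [← ENNReal.ofReal_pow (by positivity),
              ← ENNReal.ofReal_mul (Real.rpow_nonneg (norm_nonneg _) _)]
        _ ≤ ENNReal.ofReal (‖a‖ ^ e' * (Real.pi * (2 * ‖a‖)) ^ m) := by
            apply ENNReal.ofReal_le_ofReal
            apply mul_le_mul_of_nonneg_left _ (Real.rpow_nonneg (norm_nonneg _) _)
            apply pow_le_pow_left₀ (by positivity)
            have hpi := Real.pi_pos
            nlinarith
        _ = Cb * ENNReal.ofReal (‖a‖ ^ ((m : ℝ) + e')) := by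
            rw [hCb, ← ENNReal.ofReal_mul (by positivity)]
            congr 1
            rw [Real.rpow_add hapos, Real.rpow_natCast]
            ring
    · have hempty : Sa = ∅ := by
        ext w
        simp only [hSa, Set.mem_setOf_eq, Set.mem_empty_iff_false, iff_false, not_lt]
        have h1 : (0 : ℝ) ≤ ∑ j, ‖w j‖ ^ 2 := by positivity
        linarith [not_lt.1 hcpos]
      rw [hempty]
      simp
  have hInt : IntegrableOn (fun z : ℂ => ‖z‖ ^ ((m : ℝ) + e')) (Metric.ball (0 : ℂ) 2) volume :=
    aux_integrableOn_rpow_C hexp (by norm_num)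
  have hfin : ∫⁻ a in Metric.ball (0 : ℂ) 2, ENNReal.ofReal (‖a‖ ^ ((m : ℝ) + e')) ∂volume < ⊤ := by
    have h := hInt.2
    rwa [hasFiniteIntegral_iff_ofReal (Filter.Eventually.of_forall fun z =>
      Real.rpow_nonneg (norm_nonneg _) _)] at h
  calc ∫⁻ z in Ω, ENNReal.ofReal (‖z 0‖ ^ e') ∂volume
      = ∫⁻ a : ℂ, ∫⁻ w : Fin m → ℂ, S.indicator G (a, w) ∂volume ∂volume := by
        rw [step1, step2]
    _ ≤ ∫⁻ a : ℂ, (Metric.ball (0 : ℂ) 2).indicator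
          (fun a => Cb * ENNReal.ofReal (‖a‖ ^ ((m : ℝ) + e'))) a ∂volume :=
        lintegral_mono step3
    _ = Cb * ∫⁻ a in Metric.ball (0 : ℂ) 2, ENNReal.ofReal (‖a‖ ^ ((m : ℝ) + e')) ∂volume := by
        rw [lintegral_indicator measurableSet_ball _,
          lintegral_const_mul _ (Measurable.ennreal_ofReal (by fun_prop) :
            Measurable fun a : ℂ => ENNReal.ofReal (‖a‖ ^ ((m : ℝ) + e')))]
    _ < ⊤ := ENNReal.mul_lt_top ENNReal.ofReal_lt_top hfin
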